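/- Let γ ∈ ℝ and let P be either (0, 1, 0) or (0, −1, 0). The Jacobian matrix of the vector field G_γ at P has eigenvalues 4, 3/2 and 6 − 3γ (i.e. its characteristic polynomial is (X − 4)(X − 3/2)(X − (6 − 3γ))). In particular, for γ ∈ [0, 2], all three eigenvalues are positive if and only if γ < 2. -/

import Mathlib

open Polynomial

/-- The averaged Bianchi V guiding vector field `G_γ` in coordinates
`p = (Ω, Σ, K) = (p 0, p 1, p 2)`. -/
noncomputable def GBV (γ : ℝ) : (Fin 3 → ℝ) → (Fin 3 → ℝ) := fun p =>
  ![-(1 / 2) * p 0 *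
      (3 * γ * ((p 1) ^ 2 + (p 0) ^ 2 + p 2 - 1) - 6 * (p 1) ^ 2 - 3 * (p 0) ^ 2
        - 2 * p 2 + 3),
    (1 / 2) * p 1 *
      (-(3 * γ) * ((p 1) ^ 2 + (p 0) ^ 2 + p 2 - 1) + 6 * (p 1) ^ 2 + 3 * (p 0) ^ 2
        + 2 * p 2 - 6),
    -(p 2) *
      (3 * γ * ((p 1) ^ 2 + (p 0) ^ 2 + p 2 - 1) - 6 * (p 1) ^ 2 - 3 * (p 0) ^ 2
        - 2 * p 2 + 2)]

/-!
`G_γ` is of Kolmogorov type: its `i`-th component is `qᵢ · cᵢ (L(q) + dᵢ)` for a single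
quadratic `L` and constants `c = (-1/2, -1/2, -1)`, `d = (3, 6, 2)`. By the product rule its
derivative at `p` is `diag(cᵢ (L(p) + dᵢ)) + (cᵢ pᵢ)ᵢ ⊗ ∇L(p)`. At `P = (0, s, 0)` with `s² = 1`
we have `L(P) = -6`, and the rank-one term only touches the `Σ`-row, so the Jacobian is upper
triangular with diagonal `3/2, 6 - 3γ, 4`; its characteristic polynomial is the product of the
`X - Jᵢᵢ`.
-/

open ContinuousLinearMap Matrix

noncomputable section

namespace GBV

def quadratic (γ : ℝ) (q : Fin 3 → ℝ) : ℝ :=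
  (3 * γ - 3) * q 0 ^ 2 + (3 * γ - 6) * q 1 ^ 2 + (3 * γ - 2) * q 2 - 3 * γ

def quadraticFDeriv (γ : ℝ) (p : Fin 3 → ℝ) : (Fin 3 → ℝ) →L[ℝ] ℝ :=
  ((6 * γ - 6) * p 0) • proj 0 + ((6 * γ - 12) * p 1) • proj 1 + (3 * γ - 2) • proj 2

def rateCoeff : Fin 3 → ℝ := ![-1 / 2, -1 / 2, -1]

def rate (γ : ℝ) (q : Fin 3 → ℝ) : Fin 3 → ℝ :=
  fun i => rateCoeff i * (quadratic γ q + ![3, 6, 2] i)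

theorem hasFDerivAt_quadratic (γ : ℝ) (p : Fin 3 → ℝ) :
    HasFDerivAt (quadratic γ) (quadraticFDeriv γ p) p := by
  have h := ((((hasFDerivAt_apply 0 p).pow 2).const_mul (3 * γ - 3)).add
    (((hasFDerivAt_apply 1 p).pow 2).const_mul (3 * γ - 6))).add
    ((hasFDerivAt_apply (𝕜 := ℝ) 2 p).const_mul (3 * γ - 2)) |>.sub_const (3 * γ)
  refine h.congr_fderiv ?_
  ext v
  simp [quadraticFDeriv]
  ring

theorem hasFDerivAt_rate (γ : ℝ) (p : Fin 3 → ℝ) :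
    HasFDerivAt (rate γ) (.pi fun i => rateCoeff i • quadraticFDeriv γ p) p :=
  hasFDerivAt_pi.2 fun i =>
    ((hasFDerivAt_quadratic γ p).add_const _).const_mul (rateCoeff i)

end GBV

open GBV

theorem GBV_eq_mul_rate (γ : ℝ) : GBV γ = fun q => q * rate γ q := by
  ext q i
  fin_cases i <;> simp [GBV, rate, rateCoeff, quadratic] <;> ring

theorem hasFDerivAt_GBV (γ : ℝ) (p : Fin 3 → ℝ) :
    HasFDerivAt (GBV γ)
      (p • (.pi fun i => rateCoeff i • quadraticFDeriv γ p) + rate γ p • .id ℝ _) p := by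
  rw [GBV_eq_mul_rate]
  exact (hasFDerivAt_id p).fun_mul (hasFDerivAt_rate γ p)

def jacobianP45 (γ s : ℝ) : Matrix (Fin 3) (Fin 3) ℝ :=
  !![3 / 2, 0, 0; 0, 6 - 3 * γ, s * (2 - 3 * γ) / 2; 0, 0, 4]

theorem hasFDerivAt_GBV_P45 (γ : ℝ) {s : ℝ} (hs : s ^ 2 = 1) :
    HasFDerivAt (GBV γ) (toLin' (jacobianP45 γ s)).toContinuousLinearMap ![0, s, 0] := by
  refine (hasFDerivAt_GBV γ _).congr_fderiv ?_
  ext v i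
  fin_cases i <;> simp [rate, rateCoeff, quadratic, quadraticFDeriv, jacobianP45, mulVec,
    dotProduct, Fin.sum_univ_three, hs, -mul_eq_mul_right_iff, -mul_eq_mul_left_iff]
  · ring
  · linear_combination (6 - 3 * γ) * v 1 * hs
  · ring

theorem charpoly_jacobianP45 (γ s : ℝ) :
    (jacobianP45 γ s).charpoly = (X - C 4) * (X - C (3 / 2)) * (X - C (6 - 3 * γ)) := by
  rw [charpoly_of_isUpperTriangular]
  · simp [Fin.prod_univ_three, jacobianP45]
    ring
  · intro i j hji
    fin_cases i <;> fin_cases j <;> simp_all [jacobianP45]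

end

/-- The Jacobian of `G_γ` at either of the points `P₄,₅ = (0, ±1, 0)` has
eigenvalues `4`, `3/2` and `6 - 3γ` (characteristic polynomial
`(X - 4)(X - 3/2)(X - (6 - 3γ))`); for `γ ∈ [0,2]` all three eigenvalues are
positive iff `γ < 2`. -/
theorem bianchiV_jacobian_P45 (γ s : ℝ) (hs : s = 1 ∨ s = -1) :
    ∃ J : Matrix (Fin 3) (Fin 3) ℝ,
      HasFDerivAt (GBV γ)
        (LinearMap.toContinuousLinearMap (Matrix.toLin' J)) ![0, s, 0] ∧
      J.charpoly = (X - C 4) * (X - C (3 / 2)) * (X - C (6 - 3 * γ)) ∧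
      (0 ≤ γ ∧ γ ≤ 2 →
        (((0 : ℝ) < 4 ∧ (0 : ℝ) < 3 / 2 ∧ 0 < 6 - 3 * γ) ↔ γ < 2)) := by
  have hs2 : s ^ 2 = 1 := by rcases hs with rfl | rfl <;> norm_num
  refine ⟨jacobianP45 γ s, hasFDerivAt_GBV_P45 γ hs2, charpoly_jacobianP45 γ s, fun _ => ?_⟩
  constructor
  · rintro ⟨-, -, h⟩
    linarith
  · intro h
    exact ⟨by norm_num, by norm_num, by linarith⟩
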